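/- arXiv:1104.2369 — 2 statements merged into one kernel-verified Lean document; each statement's English description precedes it below -/
import Mathlib

section
/- Let A be an associative unital algebra over the complex numbers ℂ and let V be a simple (left) A-module whose underlying ℂ-vector space has countable dimension. Then every A-module endomorphism of V is given by multiplication by a complex scalar; that is, Hom_A(V, V) = ℂ·id_V. -/
/-!
By Schur's lemma `D = End_A(V)` is a division algebra over `ℂ`, and evaluation at a nonzero vector
embeds it `ℂ`-linearly into `V`, so `dim_ℂ D ≤ ℵ₀`. If some `φ ∈ D` were transcendental over `ℂ`,
the elements `(φ - c)⁻¹`, `c ∈ ℂ`, would be linearly independent, giving `dim_ℂ D ≥ 𝔠 > ℵ₀`.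
Hence `D` is algebraic over the algebraically closed field `ℂ`, so `D = ℂ`.
-/

open Cardinal

universe u v

section DivisionAlgebra

variable {K : Type u} {D : Type v} [Field K] [DivisionRing D] [Algebra K D]

theorem Transcendental.linearIndependent_sub_inv_of_divisionRing {x : D}
    (H : Transcendental K x) : LinearIndependent K fun a ↦ (x - algebraMap K D a)⁻¹ := by
  -- The double centralizer of `x` is a commutative sub-division-ring, i.e. a field.
  let S := Subalgebra.centralizer K (Subalgebra.centralizer K ({x} : Set D) : Set D)
  have hx : x ∈ S := Set.subset_centralizer_centralizer rfl
  have hcomm : ∀ a b : S, a * b = b * a := fun a b ↦ Subtype.ext <|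
    Set.centralizer_centralizer_comm_of_comm (by simp) _ a.2 _ b.2
  let _ : Field S := IsField.toField
    ⟨exists_pair_ne S, hcomm, fun {a} ha ↦ ⟨⟨(a : D)⁻¹, Set.inv_mem_centralizer₀ a.2⟩,
      Subtype.ext (mul_inv_cancel₀ (by simpa using ha))⟩⟩
  have key := (Subalgebra.transcendental_iff_transcendental_val (x := (⟨x, hx⟩ : S)) |>.2 H)
    |>.linearIndependent_sub_inv
  have hval (a : K) : ((⟨x, hx⟩ - algebraMap K S a)⁻¹ : S) = (x - algebraMap K D a)⁻¹ :=
    map_inv₀ S.val _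
  simpa [Function.comp_def, hval] using
    key.map' S.val.toLinearMap (LinearMap.ker_eq_bot.2 Subtype.val_injective)

theorem Algebra.IsAlgebraic.of_lift_rank_lt
    (h : lift.{u} (Module.rank K D) < lift.{v} #K) : Algebra.IsAlgebraic K D :=
  ⟨fun _ ↦ by_contra fun hx ↦
    h.not_ge (Transcendental.linearIndependent_sub_inv_of_divisionRing hx).cardinal_lift_le_rank⟩

end DivisionAlgebra

theorem IsSimpleModule.rank_end_le_rank (K A : Type*) {V : Type*} [Field K] [Ring A]
    [Algebra K A] [AddCommGroup V] [Module K V] [Module A V] [IsScalarTower K A V]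
    [IsSimpleModule A V] : Module.rank K (Module.End A V) ≤ Module.rank K V := by
  have : Nontrivial V := IsSimpleModule.nontrivial A V
  obtain ⟨v, hv⟩ := exists_ne (0 : V)
  refine LinearMap.rank_le_of_injective (LinearMap.applyₗ' K v) fun f g hfg ↦ ?_
  by_contra hne
  exact hv (LinearMap.injective_of_ne_zero (sub_ne_zero.2 hne) (by simpa [sub_eq_zero] using hfg))

/-- Schur's Lemma for countable dimension: every `A`-module endomorphism of a
simple `A`-module of countable dimension over `ℂ` is a complex scalar. -/
theorem schur_countable_dim (A : Type*) [Ring A] [Algebra ℂ A]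
    (V : Type*) [AddCommGroup V] [Module ℂ V] [Module A V] [IsScalarTower ℂ A V]
    [IsSimpleModule A V] (hV : Module.rank ℂ V ≤ Cardinal.aleph0)
    (f : V →ₗ[A] V) : ∃ c : ℂ, ∀ v : V, f v = c • v := by
  classical
  have : Algebra.IsAlgebraic ℂ (Module.End A V) := .of_lift_rank_lt <| by
    rw [lift_uzero, Cardinal.mk_complex, lift_continuum]
    exact ((IsSimpleModule.rank_end_le_rank ℂ A).trans hV).trans_lt aleph0_lt_continuum
  obtain ⟨c, rfl⟩ := IsAlgClosed.algebraMap_bijective_of_isIntegral (k := ℂ).2 f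
  exact ⟨c, fun v ↦ rfl⟩
end

section
/- Let A be an associative unital algebra over the complex numbers ℂ and let V be a simple A-module whose underlying ℂ-vector space has countable dimension. Then the ring Hom_A(V, V) of A-module endomorphisms of V has countable dimension as a ℂ-vector space. -/
/-- The endomorphism ring of a simple `A`-module of countable dimension over
`ℂ` has countable dimension over `ℂ`. -/
theorem endomorphism_ring_countable_dim (A : Type*) [Ring A] [Algebra ℂ A]
    (V : Type*) [AddCommGroup V] [Module ℂ V] [Module A V] [IsScalarTower ℂ A V]
    [SMulCommClass A ℂ V] [IsSimpleModule A V]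
    (hV : Module.rank ℂ V ≤ Cardinal.aleph0) :
    Module.rank ℂ (V →ₗ[A] V) ≤ Cardinal.aleph0 := by
  obtain ⟨v, hv⟩ : ∃ v : V, v ≠ 0 := by
    have : Nontrivial V := IsSimpleModule.nontrivial A V
    exact exists_ne 0
  let ev : (V →ₗ[A] V) →ₗ[ℂ] V :=
    { toFun := fun f => f v
      map_add' := fun f g => rfl
      map_smul' := fun c f => rfl }
  have hinj : Function.Injective ev := by
    intro f g hfg
    have h : f - g = 0 := by
      by_contra hne
      have hker : LinearMap.ker (f - g) = ⊥ := by
        rcases eq_bot_or_eq_top (LinearMap.ker (f - g)) with h | h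
        · exact h
        · exact absurd (LinearMap.ker_eq_top.mp h) hne
      have hv0 : v ∈ LinearMap.ker (f - g) := by
        simp only [LinearMap.mem_ker, LinearMap.sub_apply]
        have : f v = g v := hfg
        simp [this]
      rw [hker] at hv0
      exact hv hv0
    exact sub_eq_zero.mp h
  exact (LinearMap.rank_le_of_injective ev hinj).trans hV
end
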